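/- Let k ≥ 1 be an integer, 2 < p < 4k+2, and let V ∈ L²+L^∞(ℝ). Define the linear quantities Σ₀ := inf { ∫_ℝ (|u^{(k)}|² + V|u|²) dx : u ∈ C_c^∞(ℝ, ℂ), ∫_ℝ |u|² dx = 1 } and Σ := lim_{R→∞} inf { ∫_ℝ (|u^{(k)}|² + V|u|²) dx : u ∈ C_c^∞(ℝ, ℂ), ∫_ℝ |u|² dx = 1, u ≡ 0 on [−R, R] }. If Σ₀ < Σ, then there exists μ̂ > 0 such that for every μ ∈ (0, μ̂) the corresponding nonlinear ground-state and threshold energies satisfy the strict inequality inf { E_V^{(k)}(u) : u ∈ C_c^∞(ℝ, ℂ), ∫_ℝ |u|² dx = 1 } < lim_{R→∞} inf { E_V^{(k)}(u) : u ∈ C_c^∞(ℝ, ℂ), ∫_ℝ |u|² dx = 1, u ≡ 0 on [−R, R] }. -/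

import Mathlib

/-!
Write `T = ‖u⁽ᵏ⁾‖₂²` and `n = ‖u'‖₂` for a normalized `u`. Integration by parts makes
`j ↦ ‖u⁽ʲ⁾‖₂` log-convex, so `n ^ (2k) ≤ T`, while `‖u‖∞² ≤ 2n`. Hence
`∫ |u|ᵖ ≤ ‖u‖∞ ^ (p - 2) ≤ c (T + 1)` because `(p - 2) / 2 ≤ 2k`, and, splitting
`V = V₂ + V_∞`, `∫ V |u|² ≥ -A - ∫ |u|⁴ / 2 ≥ -A - n ≥ -T/2 - D`, i.e. `T ≤ 2 Q(u) + 2D`.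
So the energy obeys `(1/2 - 2cμ/p) Q(u) - (μ/p) c (2D + 1) ≤ E_μ(u) ≤ Q(u) / 2`; taking infima,
the nonlinear ground state energy is at most `Σ₀ / 2` and the nonlinear threshold at least
`(1/2 - 2cμ/p) Σ_R - O(μ)`, so the gap `Σ₀ < Σ_R` survives for small `μ`.
-/

open MeasureTheory

/-- The set of values of the quadratic form `u ↦ ∫(|u⁽ᵏ⁾|² + V|u|²)` over normalized
`u ∈ C_c^∞(ℝ, ℂ)` vanishing on `[−R, R]` (no support constraint if `R < 0`). -/
def quadraticValues (k : ℕ) (V : ℝ → ℝ) (R : ℝ) : Set ℝ :=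
  {r : ℝ | ∃ u : ℝ → ℂ, ContDiff ℝ (⊤ : ℕ∞) u ∧ HasCompactSupport u ∧
    (∫ x : ℝ, ‖u x‖ ^ 2) = 1 ∧ (∀ x ∈ Set.Icc (-R) R, u x = 0) ∧
    (∫ x : ℝ, (‖iteratedDeriv k u x‖ ^ 2 + V x * ‖u x‖ ^ 2)) = r}

/-- The set of values of the higher-order NLS energy
`E_V⁽ᵏ⁾(u) = ½∫(|u⁽ᵏ⁾|² + V|u|²) − (μ/p)∫|u|ᵖ` over normalized `u ∈ C_c^∞(ℝ, ℂ)`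
vanishing on `[−R, R]` (no support constraint if `R < 0`). -/
def nlsValues (k : ℕ) (V : ℝ → ℝ) (μ p R : ℝ) : Set ℝ :=
  {r : ℝ | ∃ u : ℝ → ℂ, ContDiff ℝ (⊤ : ℕ∞) u ∧ HasCompactSupport u ∧
    (∫ x : ℝ, ‖u x‖ ^ 2) = 1 ∧ (∀ x ∈ Set.Icc (-R) R, u x = 0) ∧
    (1 / 2) * (∫ x : ℝ, (‖iteratedDeriv k u x‖ ^ 2 + V x * ‖u x‖ ^ 2)) -
      (μ / p) * (∫ x : ℝ, ‖u x‖ ^ p) = r}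

open Filter Topology

theorem Real.rpow_le_rpow_add_one {t a b : ℝ} (ht : 0 ≤ t) (ha : 0 ≤ a) (hab : a ≤ b) :
    t ^ a ≤ t ^ b + 1 := by
  rcases le_total t 1 with h | h
  · linarith [Real.rpow_le_one ht h ha, Real.rpow_nonneg ht b]
  · linarith [Real.rpow_le_rpow_of_exponent_le h hab]

theorem Real.rpow_le_rpow_mul_sq {t M p : ℝ} (ht : 0 ≤ t) (htM : t ^ 2 ≤ M) (hp : 2 ≤ p) :
    t ^ p ≤ M ^ ((p - 2) / 2) * t ^ 2 := by
  rcases ht.eq_or_lt with rfl | ht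
  · rw [Real.zero_rpow (by linarith)]; positivity
  calc t ^ p = t ^ (2 * ((p - 2) / 2) + 2) := by ring_nf
    _ = (t ^ 2) ^ ((p - 2) / 2) * t ^ 2 := by
        rw [Real.rpow_add ht, Real.rpow_mul ht.le, Real.rpow_two]
    _ ≤ M ^ ((p - 2) / 2) * t ^ 2 := by gcongr

theorem pow_le_of_sq_succ_le_mul {N : ℕ → ℝ} (hN : ∀ j, 0 ≤ N j) (hN0 : N 0 = 1)
    (hconv : ∀ j, N (j + 1) ^ 2 ≤ N j * N (j + 2)) (k : ℕ) : N 1 ^ k ≤ N k := by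
  have step : ∀ j, N 1 * N j ≤ N (j + 1) := by
    intro j
    induction j with
    | zero => simp [hN0]
    | succ j ih =>
      rcases (hN (j + 1)).eq_or_lt with h | h
      · rw [← h, mul_zero]; exact hN _
      · refine le_of_mul_le_mul_left ?_ h
        nlinarith [hconv j, mul_le_mul_of_nonneg_right ih (hN (j + 2)), hN 1]
  induction k with
  | zero => simp [hN0]
  | succ k ih =>
    calc N 1 ^ (k + 1) = N 1 * N 1 ^ k := pow_succ' _ _
      _ ≤ N 1 * N k := mul_le_mul_of_nonneg_left ih (hN 1)
      _ ≤ N (k + 1) := step k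

namespace MeasureTheory

variable {α : Type*} [MeasurableSpace α] {μ : Measure α}

theorem integral_mul_le_sqrt_mul_sqrt {f g : α → ℝ} (hf0 : 0 ≤ᵐ[μ] f) (hg0 : 0 ≤ᵐ[μ] g)
    (hf : MemLp f 2 μ) (hg : MemLp g 2 μ) :
    ∫ x, f x * g x ∂μ ≤ √(∫ x, f x ^ 2 ∂μ) * √(∫ x, g x ^ 2 ∂μ) := by
  have h := integral_mul_le_Lp_mul_Lq_of_nonneg Real.HolderConjugate.two_two hf0 hg0
    (by simpa using hf) (by simpa using hg)
  simpa only [Real.rpow_two, Real.sqrt_eq_rpow, one_div] using h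

theorem MemLp.exists_ae_abs_le {f : α → ℝ} (hf : MemLp f ⊤ μ) : ∃ B, ∀ᵐ x ∂μ, |f x| ≤ B := by
  refine ⟨(eLpNorm f ⊤ μ).toReal, ?_⟩
  filter_upwards [ae_le_eLpNormEssSup (f := f) (μ := μ)] with x hx
  rw [← eLpNorm_exponent_top] at hx
  simpa using ENNReal.toReal_mono hf.2.ne hx

theorem exists_le_integral_add_mul {V₂ Vinf : α → ℝ} (hV₂ : MemLp V₂ 2 μ)
    (hVinf : MemLp Vinf ⊤ μ) :
    ∃ A B : ℝ, ∀ w : α → ℝ, (∀ x, 0 ≤ w x) → MemLp w 1 μ → MemLp w 2 μ →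
      Integrable (fun x => (V₂ + Vinf) x * w x) μ ∧
      -A - B * (∫ x, w x ∂μ) - (∫ x, w x ^ 2 ∂μ) / 2 ≤ ∫ x, (V₂ + Vinf) x * w x ∂μ := by
  obtain ⟨B, hB⟩ := hVinf.exists_ae_abs_le
  refine ⟨(∫ x, V₂ x ^ 2 ∂μ) / 2, B, fun w hw0 hw1 hw2 => ?_⟩
  have hw : Integrable w μ := memLp_one_iff_integrable.1 hw1
  have hsq : Integrable (fun x => (V₂ x ^ 2 + w x ^ 2) / 2) μ :=
    (hV₂.integrable_sq.add hw2.integrable_sq).div_const 2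
  have hi₂ : Integrable (fun x => V₂ x * w x) μ := hV₂.integrable_mul hw2
  have hiB : Integrable (fun x => Vinf x * w x) μ := hw.mul_of_top_right hVinf
  have hsplit : (fun x => (V₂ + Vinf) x * w x) = fun x => V₂ x * w x + Vinf x * w x := by
    ext x; simp [add_mul]
  refine ⟨hsplit ▸ hi₂.add hiB, ?_⟩
  have hV₂w : ∫ x, -((V₂ x ^ 2 + w x ^ 2) / 2) ∂μ ≤ ∫ x, V₂ x * w x ∂μ :=
    integral_mono hsq.neg hi₂ fun x => by nlinarith [sq_nonneg (V₂ x + w x)]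
  have hBw : ∫ x, -(B * w x) ∂μ ≤ ∫ x, Vinf x * w x ∂μ := by
    refine integral_mono_ae (hw.const_mul B).neg hiB ?_
    filter_upwards [hB] with x hx
    nlinarith [abs_le.1 hx, hw0 x]
  rw [integral_neg, integral_div, integral_add hV₂.integrable_sq hw2.integrable_sq] at hV₂w
  rw [integral_neg, integral_const_mul] at hBw
  rw [hsplit, integral_add hi₂ hiB]
  linarith

end MeasureTheory

theorem HasCompactSupport.iteratedDeriv {𝕜 F : Type*} [NontriviallyNormedField 𝕜]
    [NormedAddCommGroup F] [NormedSpace 𝕜 F] {f : 𝕜 → F} (hf : HasCompactSupport f) (n : ℕ) :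
    HasCompactSupport (iteratedDeriv n f) := by
  induction n with
  | zero => simpa
  | succ n ih => rw [iteratedDeriv_succ]; exact ih.deriv

theorem HasCompactSupport.norm_sq {X E : Type*} [TopologicalSpace X] [NormedAddCommGroup E]
    {f : X → E} (hs : HasCompactSupport f) : HasCompactSupport (fun x => ‖f x‖ ^ 2) :=
  hs.comp_left (g := (‖·‖ ^ 2)) (by simp)

theorem Continuous.integrable_norm_sq {E : Type*} [NormedAddCommGroup E] {f : ℝ → E}
    (hc : Continuous f) (hs : HasCompactSupport f) : Integrable (fun x => ‖f x‖ ^ 2) :=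
  (hc.norm.pow 2).integrable_of_hasCompactSupport hs.norm_sq

section InnerProductSpace

open scoped RealInnerProductSpace

variable {F : Type*} [NormedAddCommGroup F] [InnerProductSpace ℝ F]

theorem integral_norm_deriv_sq_le {f f' f'' : ℝ → F} (hf : ∀ x, HasDerivAt f (f' x) x)
    (hf' : ∀ x, HasDerivAt f' (f'' x) x) (hc : Continuous f'') (hs : HasCompactSupport f) :
    ∫ x, ‖f' x‖ ^ 2 ≤ √(∫ x, ‖f x‖ ^ 2) * √(∫ x, ‖f'' x‖ ^ 2) := by
  have hfc : Continuous f := continuous_iff_continuousAt.2 fun x => (hf x).continuousAt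
  have hfc' : Continuous f' := continuous_iff_continuousAt.2 fun x => (hf' x).continuousAt
  have hs' : HasCompactSupport f' := by
    rw [show f' = deriv f from funext fun x => (hf x).deriv.symm]; exact hs.deriv
  have hs'' : HasCompactSupport f'' := by
    rw [show f'' = deriv f' from funext fun x => (hf' x).deriv.symm]; exact hs'.deriv
  have hi₁ : Integrable (fun x => ⟪f x, f'' x⟫) :=
    (hfc.inner hc).integrable_of_hasCompactSupport (hs.comp₂_left hs'' (inner_zero_left _))
  have hi₂ : Integrable (fun x => ‖f' x‖ ^ 2) := hfc'.integrable_norm_sq hs'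
  -- the integrand is the derivative of the compactly supported `⟪f, f'⟫`
  have hibp : ∫ x, (⟪f x, f'' x⟫ + ‖f' x‖ ^ 2) = 0 := by
    simp_rw [← real_inner_self_eq_norm_sq]
    refine integral_eq_zero_of_hasDerivAt_of_integrable (fun x => (hf x).inner ℝ (hf' x)) ?_
      ((hfc.inner hfc').integrable_of_hasCompactSupport (hs.comp₂_left hs' (inner_zero_left _)))
    simp only [real_inner_self_eq_norm_sq]
    exact hi₁.add hi₂
  rw [integral_add hi₁ hi₂] at hibp
  calc ∫ x, ‖f' x‖ ^ 2 = ∫ x, -⟪f x, f'' x⟫ := by rw [integral_neg]; linarith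
    _ ≤ ∫ x, ‖f x‖ * ‖f'' x‖ :=
        integral_mono hi₁.neg ((hfc.norm.mul hc.norm).integrable_of_hasCompactSupport
          hs.norm.mul_right) fun x => (neg_le_abs _).trans (abs_real_inner_le_norm _ _)
    _ ≤ √(∫ x, ‖f x‖ ^ 2) * √(∫ x, ‖f'' x‖ ^ 2) :=
        integral_mul_le_sqrt_mul_sqrt (.of_forall fun _ => norm_nonneg _)
          (.of_forall fun _ => norm_nonneg _) (hfc.memLp_of_hasCompactSupport hs).norm
          (hc.memLp_of_hasCompactSupport hs'').norm

theorem norm_sq_le_two_mul_integral_norm_mul_norm {f f' : ℝ → F}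
    (hf : ∀ x, HasDerivAt f (f' x) x) (hc : Continuous f') (hs : HasCompactSupport f) (x : ℝ) :
    ‖f x‖ ^ 2 ≤ 2 * ∫ t, ‖f t‖ * ‖f' t‖ := by
  have hfc : Continuous f := continuous_iff_continuousAt.2 fun x => (hf x).continuousAt
  obtain ⟨m, hm⟩ := hs.isCompact.bddBelow
  set a := min x (m - 1)
  have hax : a ≤ x := min_le_left _ _
  have hfa : f a = 0 :=
    image_eq_zero_of_notMem_tsupport fun h => by linarith [hm h, min_le_right x (m - 1)]
  have hint : Integrable fun t => 2 * (‖f t‖ * ‖f' t‖) :=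
    ((hfc.norm.mul hc.norm).integrable_of_hasCompactSupport hs.norm.mul_right).const_mul 2
  calc ‖f x‖ ^ 2 = ∫ t in a..x, 2 * ⟪f t, f' t⟫ := by
        rw [intervalIntegral.integral_eq_sub_of_hasDerivAt (fun t _ => (hf t).norm_sq)
          ((continuous_const.mul (hfc.inner hc)).intervalIntegrable _ _), hfa]
        simp
    _ ≤ ∫ t in a..x, 2 * (‖f t‖ * ‖f' t‖) :=
        intervalIntegral.integral_mono_on hax
          ((continuous_const.mul (hfc.inner hc)).intervalIntegrable _ _)
          hint.intervalIntegrable fun t _ => by gcongr; exact real_inner_le_norm _ _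
    _ ≤ ∫ t, 2 * (‖f t‖ * ‖f' t‖) := by
        rw [intervalIntegral.integral_of_le hax]
        exact setIntegral_le_integral hint (.of_forall fun t => by positivity)
    _ = 2 * ∫ t, ‖f t‖ * ‖f' t‖ := integral_const_mul _ _

noncomputable def iteratedDerivL2 (j : ℕ) (u : ℝ → F) : ℝ :=
  √(∫ x, ‖iteratedDeriv j u x‖ ^ 2)

variable {u : ℝ → F}

theorem ContDiff.hasDerivAt_iteratedDeriv (hu : ContDiff ℝ (⊤ : ℕ∞) u) (j : ℕ) (x : ℝ) :
    HasDerivAt (iteratedDeriv j u) (iteratedDeriv (j + 1) u x) x := by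
  rw [iteratedDeriv_succ]
  exact (hu.differentiable_iteratedDeriv j (mod_cast WithTop.coe_lt_top j) x).hasDerivAt

variable (hu : ContDiff ℝ (⊤ : ℕ∞) u) (hs : HasCompactSupport u)
include hu hs

theorem iteratedDerivL2_succ_sq_le (j : ℕ) :
    iteratedDerivL2 (j + 1) u ^ 2 ≤ iteratedDerivL2 j u * iteratedDerivL2 (j + 2) u := by
  rw [iteratedDerivL2, Real.sq_sqrt (integral_nonneg fun _ => by positivity)]
  exact integral_norm_deriv_sq_le (hu.hasDerivAt_iteratedDeriv j)
    (hu.hasDerivAt_iteratedDeriv (j + 1))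
    (hu.continuous_iteratedDeriv (j + 2) (WithTop.coe_le_coe.2 le_top))
    (hs.iteratedDeriv j)

variable (hnorm : ∫ x, ‖u x‖ ^ 2 = 1)
include hnorm

theorem iteratedDerivL2_one_pow_le (k : ℕ) :
    iteratedDerivL2 1 u ^ (2 * k) ≤ ∫ x, ‖iteratedDeriv k u x‖ ^ 2 := by
  have h := pow_le_of_sq_succ_le_mul (N := (iteratedDerivL2 · u)) (fun _ => Real.sqrt_nonneg _)
    (by simp [iteratedDerivL2, hnorm]) (iteratedDerivL2_succ_sq_le hu hs) k
  calc iteratedDerivL2 1 u ^ (2 * k) = (iteratedDerivL2 1 u ^ k) ^ 2 := by ring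
    _ ≤ iteratedDerivL2 k u ^ 2 := by gcongr; exact pow_nonneg (Real.sqrt_nonneg _) k
    _ = ∫ x, ‖iteratedDeriv k u x‖ ^ 2 :=
        Real.sq_sqrt (integral_nonneg fun _ => by positivity)

theorem norm_sq_le_two_mul_iteratedDerivL2_one (x : ℝ) :
    ‖u x‖ ^ 2 ≤ 2 * iteratedDerivL2 1 u := by
  have hd : ∀ x, HasDerivAt u (iteratedDeriv 1 u x) x := by
    simpa using hu.hasDerivAt_iteratedDeriv 0
  have hc : Continuous (iteratedDeriv 1 u) :=
    hu.continuous_iteratedDeriv 1 (WithTop.coe_le_coe.2 le_top)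
  calc ‖u x‖ ^ 2 ≤ 2 * ∫ t, ‖u t‖ * ‖iteratedDeriv 1 u t‖ :=
        norm_sq_le_two_mul_integral_norm_mul_norm hd hc hs x
    _ ≤ 2 * (√(∫ t, ‖u t‖ ^ 2) * √(∫ t, ‖iteratedDeriv 1 u t‖ ^ 2)) := by
        gcongr
        exact integral_mul_le_sqrt_mul_sqrt (.of_forall fun _ => norm_nonneg _)
          (.of_forall fun _ => norm_nonneg _) (hu.continuous.memLp_of_hasCompactSupport hs).norm
          (hc.memLp_of_hasCompactSupport (hs.iteratedDeriv 1)).norm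
    _ = 2 * iteratedDerivL2 1 u := by rw [hnorm, Real.sqrt_one, one_mul, iteratedDerivL2]

theorem integral_norm_rpow_le {k : ℕ} {p : ℝ} (hp : 2 ≤ p) (hpk : p ≤ 4 * k + 2) :
    ∫ x, ‖u x‖ ^ p ≤ 2 ^ ((p - 2) / 2) * ((∫ x, ‖iteratedDeriv k u x‖ ^ 2) + 1) := by
  have hn : 0 ≤ iteratedDerivL2 1 u := Real.sqrt_nonneg _
  calc ∫ x, ‖u x‖ ^ p ≤ ∫ x, (2 * iteratedDerivL2 1 u) ^ ((p - 2) / 2) * ‖u x‖ ^ 2 :=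
        integral_mono_of_nonneg (.of_forall fun _ => by positivity)
          ((hu.continuous.integrable_norm_sq hs).const_mul _) (.of_forall fun x =>
            Real.rpow_le_rpow_mul_sq (norm_nonneg _)
              (norm_sq_le_two_mul_iteratedDerivL2_one hu hs hnorm x) hp)
    _ = 2 ^ ((p - 2) / 2) * iteratedDerivL2 1 u ^ ((p - 2) / 2) := by
        rw [integral_const_mul, hnorm, mul_one, Real.mul_rpow zero_le_two hn]
    _ ≤ 2 ^ ((p - 2) / 2) * (iteratedDerivL2 1 u ^ ((2 * k : ℕ) : ℝ) + 1) := by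
        gcongr
        exact Real.rpow_le_rpow_add_one hn (by linarith) (by push_cast; linarith)
    _ ≤ 2 ^ ((p - 2) / 2) * ((∫ x, ‖iteratedDeriv k u x‖ ^ 2) + 1) := by
        rw [Real.rpow_natCast]
        gcongr
        exact iteratedDerivL2_one_pow_le hu hs hnorm k

end InnerProductSpace

theorem exists_integral_iteratedDeriv_sq_le {F : Type*} [NormedAddCommGroup F]
    [InnerProductSpace ℝ F] {k : ℕ} (hk : 1 ≤ k) {V₂ Vinf : ℝ → ℝ} (hV₂ : MemLp V₂ 2 volume)
    (hVinf : MemLp Vinf ⊤ volume) :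
    ∃ D : ℝ, ∀ u : ℝ → F, ContDiff ℝ (⊤ : ℕ∞) u → HasCompactSupport u →
      ∫ x, ‖u x‖ ^ 2 = 1 →
      ∫ x, ‖iteratedDeriv k u x‖ ^ 2 ≤
        2 * (∫ x, (‖iteratedDeriv k u x‖ ^ 2 + (V₂ + Vinf) x * ‖u x‖ ^ 2)) + 2 * D := by
  obtain ⟨A, B, hV⟩ := exists_le_integral_add_mul hV₂ hVinf
  refine ⟨A + B + 1, fun u hu hs hnorm => ?_⟩
  have hu2 : MemLp (fun x => ‖u x‖ ^ 2) 1 volume ∧ MemLp (fun x => ‖u x‖ ^ 2) 2 volume :=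
    ⟨(hu.continuous.norm.pow 2).memLp_of_hasCompactSupport hs.norm_sq,
      (hu.continuous.norm.pow 2).memLp_of_hasCompactSupport hs.norm_sq⟩
  obtain ⟨hVi, hVle⟩ := hV _ (fun x => by positivity) hu2.1 hu2.2
  rw [hnorm] at hVle
  have hn : 0 ≤ iteratedDerivL2 1 u := Real.sqrt_nonneg _
  have hsup := norm_sq_le_two_mul_iteratedDerivL2_one hu hs hnorm
  have h4 : ∫ x, (‖u x‖ ^ 2) ^ 2 ≤ 2 * iteratedDerivL2 1 u := by
    calc ∫ x, (‖u x‖ ^ 2) ^ 2 ≤ ∫ x, 2 * iteratedDerivL2 1 u * ‖u x‖ ^ 2 :=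
          integral_mono_of_nonneg (.of_forall fun _ => by positivity)
            ((hu.continuous.integrable_norm_sq hs).const_mul _) (.of_forall fun x => by
              dsimp only; rw [sq (‖u x‖ ^ 2)]; gcongr; exact hsup x)
      _ = 2 * iteratedDerivL2 1 u := by rw [integral_const_mul, hnorm, mul_one]
  have hn2 : iteratedDerivL2 1 u ^ 2 ≤ (∫ x, ‖iteratedDeriv k u x‖ ^ 2) + 1 := by
    have h := Real.rpow_le_rpow_add_one (a := 2) (b := (2 * k : ℕ)) hn zero_le_two
      (by push_cast; linarith [(Nat.one_le_cast (α := ℝ)).2 hk])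
    rw [Real.rpow_two, Real.rpow_natCast] at h
    linarith [iteratedDerivL2_one_pow_le hu hs hnorm k]
  have hAM : 2 * iteratedDerivL2 1 u ≤ iteratedDerivL2 1 u ^ 2 + 1 := by
    nlinarith [sq_nonneg (iteratedDerivL2 1 u - 1)]
  have hTi : Integrable (fun x => ‖iteratedDeriv k u x‖ ^ 2) :=
    (hu.continuous_iteratedDeriv k (WithTop.coe_le_coe.2 le_top)).integrable_norm_sq
      (hs.iteratedDeriv k)
  rw [integral_add hTi hVi]
  linarith

theorem exists_normalized_vanishing_on_Icc (R : ℝ) :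
    ∃ u : ℝ → ℂ, ContDiff ℝ (⊤ : ℕ∞) u ∧ HasCompactSupport u ∧ ∫ x, ‖u x‖ ^ 2 = 1 ∧
      ∀ x ∈ Set.Icc (-R) R, u x = 0 := by
  obtain ⟨f, hfR, hfs, hfd, -, hf1⟩ := exists_contDiff_tsupport_subset (n := ⊤)
    (Ioi_mem_nhds (lt_add_one R))
  have hfs2 : HasCompactSupport (fun x => f x ^ 2) := hfs.comp_left (g := (· ^ 2)) (by simp)
  have hI : 0 < ∫ x, f x ^ 2 :=
    (hfd.continuous.pow 2).integral_pos_of_hasCompactSupport_nonneg_nonzero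
      hfs2 (fun _ => sq_nonneg _) (x := R + 1) (by simp [hf1])
  set c := (√(∫ x, f x ^ 2))⁻¹
  refine ⟨fun x => ((c * f x : ℝ) : ℂ), ?_, ?_, ?_, ?_⟩
  · exact Complex.ofRealCLM.contDiff.comp (contDiff_const.mul hfd)
  · exact hfs.mul_left.comp_left (g := ((↑) : ℝ → ℂ)) Complex.ofReal_zero
  · simp_rw [Complex.norm_real, Real.norm_eq_abs, sq_abs, mul_pow]
    rw [integral_const_mul, inv_pow, Real.sq_sqrt hI.le, inv_mul_cancel₀ hI.ne']
  · intro x hx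
    have : f x = 0 := image_eq_zero_of_notMem_tsupport fun h => (hfR h).not_ge hx.2
    simp [this]

theorem quadraticValues_nonempty (k : ℕ) (V : ℝ → ℝ) (R : ℝ) :
    (quadraticValues k V R).Nonempty := by
  obtain ⟨u, hu, hs, hnorm, hzero⟩ := exists_normalized_vanishing_on_Icc R
  exact ⟨_, u, hu, hs, hnorm, hzero, rfl⟩

theorem nlsValues_nonempty (k : ℕ) (V : ℝ → ℝ) (μ p R : ℝ) :
    (nlsValues k V μ p R).Nonempty := by
  obtain ⟨u, hu, hs, hnorm, hzero⟩ := exists_normalized_vanishing_on_Icc R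
  exact ⟨_, u, hu, hs, hnorm, hzero, rfl⟩

section Energy

variable {k : ℕ} {V : ℝ → ℝ} {c D μ p R : ℝ}

theorem sInf_nlsValues_le (hμp : 0 ≤ μ / p) (hbdd : BddBelow (nlsValues k V μ p R)) :
    sInf (nlsValues k V μ p R) ≤ sInf (quadraticValues k V R) / 2 := by
  suffices 2 * sInf (nlsValues k V μ p R) ≤ sInf (quadraticValues k V R) by linarith
  refine le_csInf (quadraticValues_nonempty k V R) ?_
  rintro _ ⟨u, hu, hs, hnorm, hzero, rfl⟩
  have hE := csInf_le hbdd ⟨u, hu, hs, hnorm, hzero, rfl⟩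
  have hP : 0 ≤ μ / p * ∫ x, ‖u x‖ ^ p := mul_nonneg hμp (integral_nonneg fun _ => by positivity)
  linarith

variable (hT : ∀ u : ℝ → ℂ, ContDiff ℝ (⊤ : ℕ∞) u → HasCompactSupport u →
  ∫ x, ‖u x‖ ^ 2 = 1 → ∫ x, ‖iteratedDeriv k u x‖ ^ 2 ≤
    2 * (∫ x, (‖iteratedDeriv k u x‖ ^ 2 + V x * ‖u x‖ ^ 2)) + 2 * D)
include hT

theorem neg_le_of_mem_quadraticValues {q : ℝ} (hq : q ∈ quadraticValues k V R) : -D ≤ q := by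
  obtain ⟨u, hu, hs, hnorm, -, rfl⟩ := hq
  have hT0 : 0 ≤ ∫ x, ‖iteratedDeriv k u x‖ ^ 2 := integral_nonneg fun _ => by positivity
  linarith [hT u hu hs hnorm]

theorem le_of_mem_nlsValues
    (hP : ∀ u : ℝ → ℂ, ContDiff ℝ (⊤ : ℕ∞) u → HasCompactSupport u → ∫ x, ‖u x‖ ^ 2 = 1 →
      ∫ x, ‖u x‖ ^ p ≤ c * ((∫ x, ‖iteratedDeriv k u x‖ ^ 2) + 1))
    (hμp : 0 ≤ μ / p) (hc : 0 ≤ c) (hlam : 0 ≤ 1 / 2 - 2 * (μ / p) * c)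
    {r : ℝ} (hr : r ∈ nlsValues k V μ p R) :
    (1 / 2 - 2 * (μ / p) * c) * sInf (quadraticValues k V R) - μ / p * c * (2 * D + 1) ≤ r := by
  obtain ⟨u, hu, hs, hnorm, hzero, rfl⟩ := hr
  set Q := ∫ x, (‖iteratedDeriv k u x‖ ^ 2 + V x * ‖u x‖ ^ 2)
  have hQ : sInf (quadraticValues k V R) ≤ Q :=
    csInf_le ⟨-D, fun _ => neg_le_of_mem_quadraticValues hT⟩ ⟨u, hu, hs, hnorm, hzero, rfl⟩
  have hP' : μ / p * ∫ x, ‖u x‖ ^ p ≤ μ / p * c * (2 * Q + 2 * D + 1) := by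
    rw [mul_assoc]
    gcongr
    linarith [hP u hu hs hnorm, mul_le_mul_of_nonneg_left (hT u hu hs hnorm) hc]
  nlinarith [mul_le_mul_of_nonneg_left hQ hlam]

end Energy

/-- The limit `Σ = lim_{R→∞} Σ_R` of the nondecreasing `R ↦ Σ_R` is encoded by `Σ₀ < Σ_R` for
some `R > 0`, and likewise for the nonlinear threshold. -/
theorem statement14 (k : ℕ) (hk : 1 ≤ k) (p : ℝ)
    (hp : 2 < p) (hp' : p < 4 * k + 2)
    (V V₂ Vinf : ℝ → ℝ) (hV : V = V₂ + Vinf)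
    (hV₂ : MemLp V₂ 2 (volume : Measure ℝ))
    (hVinf : MemLp Vinf ⊤ (volume : Measure ℝ))
    (hgap : ∃ R : ℝ, 0 < R ∧
      sInf (quadraticValues k V (-1)) < sInf (quadraticValues k V R)) :
    ∃ μhat : ℝ, 0 < μhat ∧ ∀ μ : ℝ, 0 < μ → μ < μhat →
      ∃ R : ℝ, 0 < R ∧
        sInf (nlsValues k V μ p (-1)) < sInf (nlsValues k V μ p R) := by
  obtain ⟨R, hR, hgap⟩ := hgap
  subst hV
  obtain ⟨D, hT⟩ := exists_integral_iteratedDeriv_sq_le (F := ℂ) hk hV₂ hVinf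
  set c : ℝ := 2 ^ ((p - 2) / 2)
  have hP : ∀ u : ℝ → ℂ, ContDiff ℝ (⊤ : ℕ∞) u → HasCompactSupport u → ∫ x, ‖u x‖ ^ 2 = 1 →
      ∫ x, ‖u x‖ ^ p ≤ c * ((∫ x, ‖iteratedDeriv k u x‖ ^ 2) + 1) :=
    fun u hu hs hnorm => integral_norm_rpow_le hu hs hnorm hp.le hp'.le
  set S₀ := sInf (quadraticValues k (V₂ + Vinf) (-1))
  set S := sInf (quadraticValues k (V₂ + Vinf) R)
  have hsmall : ∀ᶠ μ in 𝓝 (0 : ℝ), 0 < 1 / 2 - 2 * (μ / p) * c ∧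
      S₀ / 2 < (1 / 2 - 2 * (μ / p) * c) * S - μ / p * c * (2 * D + 1) := by
    refine (continuousAt_const.eventually_lt (by fun_prop) ?_).and
      (continuousAt_const.eventually_lt (by fun_prop) ?_) <;> simp; linarith
  obtain ⟨ε, hε, hball⟩ := Metric.eventually_nhds_iff.1 hsmall
  refine ⟨ε, hε, fun μ hμ hμε => ⟨R, hR, ?_⟩⟩
  obtain ⟨hlam, hlt⟩ := hball (by rwa [Real.dist_0_eq_abs, abs_of_pos hμ])
  have hμp : 0 ≤ μ / p := div_nonneg hμ.le (by linarith)
  have hlow := fun {R' r : ℝ} =>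
    le_of_mem_nlsValues (R := R') (r := r) hT hP hμp (by positivity) hlam.le
  calc sInf (nlsValues k (V₂ + Vinf) μ p (-1)) ≤ S₀ / 2 :=
        sInf_nlsValues_le hμp ⟨_, fun _ => hlow⟩
    _ < _ := hlt
    _ ≤ _ := le_csInf (nlsValues_nonempty k _ μ p R) fun _ => hlow
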